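/- arXiv:2410.20224 — 2 statements merged into one kernel-verified Lean document; each statement's English description precedes it below -/
import Mathlib

section
/- For every configuration C that contains a set with at least two elements (i.e., C is not a singleton configuration and is not forced to be one), there exist configurations A and B, each strictly dominated by C, such that C is a combination of A and B. (Configuration splitting.) -/
namespace RoundElim

/-- The configuration (multiset of cardinality `δ`) associated to a function `Fin δ → α`. -/
def ofFn {α : Type*} {δ : ℕ} (f : Fin δ → α) : Multiset α :=
  (List.ofFn f : List α)

variable {σ : Type*} [DecidableEq σ]

/-- `DominatedBy A B` means: configuration `B` dominates configuration `A`. -/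
def DominatedBy (A B : Multiset (Finset σ)) : Prop :=
  Multiset.Rel (· ⊆ ·) A B

/-- `StrictlyDominatedBy A B` means: configuration `B` strictly dominates configuration `A`. -/
def StrictlyDominatedBy (A B : Multiset (Finset σ)) : Prop :=
  DominatedBy A B ∧ ¬ DominatedBy B A

/-- The combination of the representatives `a`, `b` with respect to the permutation `φ`
and the index `u`: union at position `u`, intersection everywhere else. -/
def combineFn {δ : ℕ} (a b : Fin δ → Finset σ) (φ : Equiv.Perm (Fin δ)) (u : Fin δ) :
    Fin δ → Finset σ :=
  fun i => if i = u then a i ∪ b (φ i) else a i ∩ b (φ i)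

/-- `C` is a combination of the configurations `A` and `B`. -/
def IsCombination (δ : ℕ) (C A B : Multiset (Finset σ)) : Prop :=
  ∃ (a b : Fin δ → Finset σ) (φ : Equiv.Perm (Fin δ)) (u : Fin δ),
    ofFn a = A ∧ ofFn b = B ∧ ofFn (combineFn a b φ u) = C

/-- `C` satisfies the universal quantifier w.r.t. the edge constraint `E`. -/
def SatUQ (E : Set (Multiset σ)) (C : Multiset (Finset σ)) : Prop :=
  ∀ M : Multiset σ, Multiset.Rel (· ∈ ·) M C → M ∈ E

/-- A singleton configuration: all its sets have exactly one element. -/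
def IsSingletonConfig (C : Multiset (Finset σ)) : Prop :=
  ∀ s ∈ C, s.card = 1

/-- The combination-closure of a set `Γ` of configurations: the smallest set containing `Γ`
and containing every combination of two of its members. -/
inductive CombClosure (δ : ℕ) (Γ : Set (Multiset (Finset σ))) :
    Multiset (Finset σ) → Prop
  | base {C : Multiset (Finset σ)} : C ∈ Γ → CombClosure δ Γ C
  | comb {A B C : Multiset (Finset σ)} : CombClosure δ Γ A → CombClosure δ Γ B →
      IsCombination δ C A B → CombClosure δ Γ C

/-! Take a set `s = c u` of `C` with `|s| ≥ 2` and a point `x ∈ s`. Replacing `s` by `s \ {x}`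
gives `A`, replacing it by `{x}` gives `B`; combining with the identity permutation at `u`
recovers `C`, since the union at `u` is `s` and every other position meets itself. Both
replacements are proper subsets, so the total size drops, which rules out `A` or `B` dominating
`C`. -/

section

open Function Finset

variable {α β : Type*}

lemma ofFn_eq_map_univ {δ : ℕ} (f : Fin δ → α) : ofFn f = univ.val.map f :=
  (Fin.univ_val_map f).symm

lemma rel_ofFn {r : α → β → Prop} {δ : ℕ} {f : Fin δ → α} {g : Fin δ → β}
    (h : ∀ i, r (f i) (g i)) : Multiset.Rel r (ofFn f) (ofFn g) := by
  rw [ofFn_eq_map_univ, ofFn_eq_map_univ, Multiset.rel_map]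
  exact Multiset.rel_refl_of_refl_on fun i _ => h i

lemma exists_ofFn_eq_of_mem {δ : ℕ} {C : Multiset α} {s : α}
    (hC : Multiset.card C = δ) (hs : s ∈ C) :
    ∃ (c : Fin δ → α) (u : Fin δ), ofFn c = C ∧ c u = s := by
  obtain ⟨l, rfl⟩ := Quot.exists_rep C
  obtain rfl : l.length = δ := hC
  obtain ⟨u, rfl⟩ := List.get_of_mem hs
  exact ⟨l.get, u, by simp [ofFn, List.ofFn_get], rfl⟩

lemma sum_card_ofFn {δ : ℕ} (f : Fin δ → Finset α) :
    ((ofFn f).map card).sum = ∑ i, (f i).card := by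
  rw [ofFn_eq_map_univ, Multiset.map_map, sum_eq_multiset_sum]
  rfl

lemma DominatedBy.sum_card_le {A B : Multiset (Finset α)} (h : DominatedBy A B) :
    (A.map card).sum ≤ (B.map card).sum := by
  induction h with
  | zero => rfl
  | cons hab _ ih =>
    simp only [Multiset.map_cons, Multiset.sum_cons]
    exact add_le_add (card_le_card hab) ih

lemma strictlyDominatedBy_of_sum_card_lt {A B : Multiset (Finset α)} (h : DominatedBy A B)
    (hlt : (A.map card).sum < (B.map card).sum) : StrictlyDominatedBy A B :=
  ⟨h, fun h' => hlt.not_ge h'.sum_card_le⟩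

lemma strictlyDominatedBy_ofFn_update {δ : ℕ} {c : Fin δ → Finset α} {u : Fin δ}
    {t : Finset α} (ht : t ⊂ c u) : StrictlyDominatedBy (ofFn (update c u t)) (ofFn c) := by
  have hle : ∀ i, update c u t i ⊆ c i := fun i => by
    rcases eq_or_ne i u with rfl | hi
    · simpa using ht.subset
    · simp [hi]
  refine strictlyDominatedBy_of_sum_card_lt (rel_ofFn hle) ?_
  rw [sum_card_ofFn, sum_card_ofFn]
  exact sum_lt_sum (fun i _ => card_le_card (hle i))
    ⟨u, mem_univ u, by simpa using card_lt_card ht⟩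

lemma combineFn_update_update {δ : ℕ} (c : Fin δ → Finset σ) (u : Fin δ) (s t : Finset σ) :
    combineFn (update c u s) (update c u t) 1 u = update c u (s ∪ t) := by
  funext i
  rcases eq_or_ne i u with rfl | hi
  · simp [combineFn]
  · simp [combineFn, hi]

end

theorem configuration_splitting_general {σ : Type*} [DecidableEq σ] (δ : ℕ)
    (C : Multiset (Finset σ)) (hCcard : Multiset.card C = δ)
    (hbig : ∃ s ∈ C, 2 ≤ s.card) :
    ∃ A B : Multiset (Finset σ),
      StrictlyDominatedBy A C ∧ StrictlyDominatedBy B C ∧ IsCombination δ C A B := by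
  obtain ⟨s, hsC, hs⟩ := hbig
  obtain ⟨c, u, rfl, rfl⟩ := exists_ofFn_eq_of_mem hCcard hsC
  obtain ⟨x, hx⟩ : (c u).Nonempty := Finset.card_pos.mp (by omega)
  have hxs : {x} ⊆ c u := Finset.singleton_subset_iff.mpr hx
  have hsplit : combineFn (Function.update c u (c u \ {x})) (Function.update c u {x}) 1 u = c := by
    rw [combineFn_update_update, Finset.sdiff_union_of_subset hxs, Function.update_eq_self]
  have hA : c u \ {x} ⊂ c u := Finset.sdiff_ssubset hxs (Finset.singleton_nonempty x)
  have hB : {x} ⊂ c u := hxs.ssubset_of_ne fun h => by simp [← h] at hs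
  exact ⟨_, _, strictlyDominatedBy_ofFn_update hA, strictlyDominatedBy_ofFn_update hB,
    _, _, 1, u, rfl, rfl, by rw [hsplit]⟩

/-- Configuration splitting: every configuration containing a set with at least two elements
is a combination of two configurations that it strictly dominates. -/
theorem configuration_splitting {σ : Type*} [Fintype σ] [DecidableEq σ] (δ : ℕ) (hδ : 0 < δ)
    (C : Multiset (Finset σ)) (hCcard : Multiset.card C = δ)
    (hbig : ∃ s ∈ C, 2 ≤ s.card) :
    ∃ A B : Multiset (Finset σ),
      StrictlyDominatedBy A C ∧ StrictlyDominatedBy B C ∧ IsCombination δ C A B :=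
  configuration_splitting_general δ C hCcard hbig

end RoundElim
end

section
/- If a configuration C is a combination of configurations A and B, and A' is a configuration dominating A and B' is a configuration dominating B, then some combination of A' and B' dominates C. (Property of dominating configurations.) -/
namespace RoundElim

variable {σ : Type*} [DecidableEq σ]

/-!
A matching witnessing domination of `ofFn a` can be transported to the indices of `a`:
`B` dominates `ofFn a` exactly when `B = ofFn b` for some `b` with `a i ⊆ b i` for all `i`.
Since `combineFn` is monotone in both representatives (for fixed `φ` and `u`), the combination
of these `b`'s with the same `φ` and `u` dominates the original combination pointwise.
-/

section Rel

variable {α β : Type*} {r : α → β → Prop}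

theorem ofFn_succ {δ : ℕ} (f : Fin (δ + 1) → α) :
    ofFn f = f 0 ::ₘ ofFn (fun i => f i.succ) := by
  simp only [ofFn, List.ofFn_succ, Multiset.cons_coe]

theorem rel_ofFn_of_forall {δ : ℕ} {a : Fin δ → α} {b : Fin δ → β} (h : ∀ i, r (a i) (b i)) :
    Multiset.Rel r (ofFn a) (ofFn b) := by
  induction δ with
  | zero => exact Multiset.Rel.zero
  | succ δ ih =>
    rw [ofFn_succ a, ofFn_succ b]
    exact Multiset.Rel.cons (h 0) (ih fun i => h i.succ)

theorem exists_ofFn_of_rel_ofFn {δ : ℕ} {a : Fin δ → α} {M : Multiset β}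
    (h : Multiset.Rel r (ofFn a) M) : ∃ b : Fin δ → β, ofFn b = M ∧ ∀ i, r (a i) (b i) := by
  induction δ generalizing M with
  | zero => exact ⟨Fin.elim0, (Multiset.rel_zero_left.mp h).symm, fun i => i.elim0⟩
  | succ δ ih =>
    rw [ofFn_succ, Multiset.rel_cons_left] at h
    obtain ⟨b₀, M', hr₀, hr, rfl⟩ := h
    obtain ⟨b, rfl, hb⟩ := ih hr
    refine ⟨Fin.cons b₀ b, by simp only [ofFn_succ, Fin.cons_zero, Fin.cons_succ], ?_⟩
    exact Fin.cases hr₀ hb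

end Rel

theorem combineFn_subset_combineFn {δ : ℕ} {a b a' b' : Fin δ → Finset σ}
    (ha : ∀ i, a i ⊆ a' i) (hb : ∀ i, b i ⊆ b' i) (φ : Equiv.Perm (Fin δ)) (u i : Fin δ) :
    combineFn a b φ u i ⊆ combineFn a' b' φ u i := by
  unfold combineFn
  split
  · exact Finset.union_subset_union (ha i) (hb (φ i))
  · exact Finset.inter_subset_inter (ha i) (hb (φ i))

theorem dominating_combination_general {σ : Type*} [DecidableEq σ] (δ : ℕ)
    (A B C A' B' : Multiset (Finset σ))
    (hC : IsCombination δ C A B) (hA : DominatedBy A A') (hB : DominatedBy B B') :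
    ∃ C' : Multiset (Finset σ), IsCombination δ C' A' B' ∧ DominatedBy C C' := by
  obtain ⟨a, b, φ, u, rfl, rfl, rfl⟩ := hC
  obtain ⟨a', rfl, ha⟩ := exists_ofFn_of_rel_ofFn hA
  obtain ⟨b', rfl, hb⟩ := exists_ofFn_of_rel_ofFn hB
  exact ⟨ofFn (combineFn a' b' φ u), ⟨a', b', φ, u, rfl, rfl, rfl⟩,
    rel_ofFn_of_forall (combineFn_subset_combineFn ha hb φ u)⟩

/-- Property of dominating configurations: if `C` is a combination of `A` and `B`, and `A'`
dominates `A` and `B'` dominates `B`, then some combination of `A'` and `B'` dominates `C`. -/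
theorem dominating_combination {σ : Type*} [Fintype σ] [DecidableEq σ] (δ : ℕ) (hδ : 0 < δ)
    (A B C A' B' : Multiset (Finset σ))
    (hC : IsCombination δ C A B) (hA : DominatedBy A A') (hB : DominatedBy B B') :
    ∃ C' : Multiset (Finset σ), IsCombination δ C' A' B' ∧ DominatedBy C C' :=
  dominating_combination_general δ A B C A' B' hC hA hB

end RoundElim
end
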